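/- arXiv:2504.16820 — 4 statements merged into one kernel-verified Lean document; each statement's English description precedes it below -/
import Mathlib

section
/- There is no symmetric y⃗-linear IPS certificate for the 4-variable F₂ system: with variables X = {x₁, x₁*, x₂, x₂*} and the group Γ ≤ Sym(X) generated by π = (x₁ x₂)(x₁* x₂*) and π* = (x₁ x₁*)(x₂ x₂*), and the six axioms f₁ = x₁+x₂+1, f₂ = x₁*+x₂*+1, f₃ = x₁*+x₂+1, f₄ = x₁+x₂*+1, f₅ = x₁+x₁*+1, f₆ = x₂+x₂*+1 over F₂, there exists no Γ-invariant polynomial C(x⃗,y⃗) ∈ F₂[X ∪ {y₁,…,y₆}] that is y⃗-linear (i.e., C = Σᵢ yᵢ gᵢ(x⃗)) and satisfies C(x⃗,f⃗) = 1. -/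
open MvPolynomial

/-!
Setting all `x`-variables to `0` turns every axiom into `1`, so the certificate equation forces
`∑ᵢ gᵢ(0) = 1`. Invariance of `C = ∑ᵢ yᵢ gᵢ(x)` under `Γ` makes `i ↦ gᵢ(0)` constant on the
`Γ`-orbits `{f₁, f₂}`, `{f₃, f₄}`, `{f₅, f₆}` of the axioms, so over `F₂` that sum vanishes.
-/

namespace MvPolynomial

variable {R σ ι : Type*} [CommSemiring R] [Fintype ι]

noncomputable def linearCertificate (g : ι → MvPolynomial σ R) : MvPolynomial (σ ⊕ ι) R :=
  ∑ i, X (Sum.inr i) * rename Sum.inl (g i)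

theorem aeval_sumElim_linearCertificate (f g : ι → MvPolynomial σ R) :
    aeval (Sum.elim X f) (linearCertificate g) = ∑ i, f i * g i := by
  simp only [linearCertificate, map_sum, map_mul, aeval_X, aeval_rename, Sum.elim_inr,
    Sum.elim_comp_inl, aeval_X_left_apply]

theorem aeval_sumElim_single_linearCertificate [DecidableEq ι] (g : ι → MvPolynomial σ R)
    (j : ι) : aeval (Sum.elim X (Pi.single j 1)) (linearCertificate g) = g j := by
  rw [aeval_sumElim_linearCertificate, Fintype.sum_eq_single j fun i hi => by simp [hi]]
  simp

theorem rename_sumMap_linearCertificate (π : σ → σ) (e : Equiv.Perm ι)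
    (g : ι → MvPolynomial σ R) :
    rename (Sum.map π e) (linearCertificate g) =
      linearCertificate fun j => rename π (g (e.symm j)) := by
  simp only [linearCertificate, map_sum, map_mul, rename_X, Sum.map_inr, rename_rename]
  exact Fintype.sum_equiv e _ _ fun i => by rw [Equiv.symm_apply_apply]; rfl

theorem rename_apply_eq_of_rename_sumMap_linearCertificate_eq {π : σ → σ} {e : Equiv.Perm ι}
    {g : ι → MvPolynomial σ R}
    (h : rename (Sum.map π e) (linearCertificate g) = linearCertificate g) (j : ι) :
    rename π (g j) = g (e j) := by
  classical
  have := congrArg (aeval (Sum.elim X (Pi.single (e j) (1 : MvPolynomial σ R)))) h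
  rwa [rename_sumMap_linearCertificate, aeval_sumElim_single_linearCertificate,
    aeval_sumElim_single_linearCertificate, Equiv.symm_apply_apply] at this

theorem constantCoeff_apply_eq_of_rename_sumMap_linearCertificate_eq {π : σ → σ}
    {e : Equiv.Perm ι} {g : ι → MvPolynomial σ R}
    (h : rename (Sum.map π e) (linearCertificate g) = linearCertificate g) (j : ι) :
    constantCoeff (g (e j)) = constantCoeff (g j) := by
  rw [← rename_apply_eq_of_rename_sumMap_linearCertificate_eq h, constantCoeff_rename]

theorem sum_constantCoeff_eq_one_of_aeval_linearCertificate_eq_one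
    {f g : ι → MvPolynomial σ R} (hf : ∀ i, constantCoeff (f i) = 1)
    (h : aeval (Sum.elim X f) (linearCertificate g) = 1) :
    ∑ i, constantCoeff (g i) = 1 := by
  rw [aeval_sumElim_linearCertificate] at h
  simpa [hf] using congrArg constantCoeff h

end MvPolynomial

/-- There is no `Γ`-invariant `y`-linear IPS certificate over `F₂`
for the six axioms `f₁,…,f₆` on variables `x₁ = 0, x₁* = 1, x₂ = 2, x₂* = 3`,
where `Γ` is generated by `π = (x₁ x₂)(x₁* x₂*)` and `π* = (x₁ x₁*)(x₂ x₂*)`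
(acting on the `y`-variables by permuting the axioms accordingly). -/
theorem stmt4 :
    ¬ ∃ g : Fin 6 → MvPolynomial (Fin 4) (ZMod 2),
      let f : Fin 6 → MvPolynomial (Fin 4) (ZMod 2) :=
        ![X 0 + X 2 + 1, X 1 + X 3 + 1, X 1 + X 2 + 1,
          X 0 + X 3 + 1, X 0 + X 1 + 1, X 2 + X 3 + 1]
      let πX : Equiv.Perm (Fin 4) := Equiv.swap 0 2 * Equiv.swap 1 3
      let πY : Equiv.Perm (Fin 6) := Equiv.swap 2 3 * Equiv.swap 4 5
      let πsX : Equiv.Perm (Fin 4) := Equiv.swap 0 1 * Equiv.swap 2 3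
      let πsY : Equiv.Perm (Fin 6) := Equiv.swap 0 1 * Equiv.swap 2 3
      let Cg : MvPolynomial (Fin 4 ⊕ Fin 6) (ZMod 2) :=
        ∑ i : Fin 6, X (Sum.inr i) * rename Sum.inl (g i)
      rename (Sum.map (fun x => πX x) (fun y => πY y)) Cg = Cg ∧
      rename (Sum.map (fun x => πsX x) (fun y => πsY y)) Cg = Cg ∧
      aeval (Sum.elim X f) Cg = 1 := by
  rintro ⟨g, hπ, hπs, hcert⟩
  have hsum := sum_constantCoeff_eq_one_of_aeval_linearCertificate_eq_one
    (fun i => by fin_cases i <;> simp) hcert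
  have h01 := constantCoeff_apply_eq_of_rename_sumMap_linearCertificate_eq hπs 0
  have h23 := constantCoeff_apply_eq_of_rename_sumMap_linearCertificate_eq hπs 2
  have h45 := constantCoeff_apply_eq_of_rename_sumMap_linearCertificate_eq hπ 4
  simp only [Equiv.Perm.coe_mul, Function.comp_apply, ne_eq, Fin.reduceEq, not_false_eq_true,
    Equiv.swap_apply_of_ne_of_ne, Equiv.swap_apply_left] at h01 h23 h45
  rw [Fin.sum_univ_six, h01, h23, h45] at hsum
  ring_nf at hsum
  reduce_mod_char at hsum
  exact zero_ne_one hsum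
end

section
/- For n ∈ ℕ, a field F with char(F) > n or char(F) = 0, and β ∈ F with β ∉ {0,1,…,n}, define f(x⃗) := −Σ_{k=0}^{n} (k! / ∏_{j=0}^{k}(β−j)) · S_{n,k}(x⃗), where S_{n,k} is the k-th elementary symmetric polynomial in x₁,…,x_n. Then f(a⃗) · (Σᵢ aᵢ − β) = 1 for every Boolean assignment a⃗ ∈ {0,1}ⁿ. -/
/-!
At a Boolean point with `s` ones, `S_{n,k}` evaluates to `C(s, k)`, so the `k`-th term of the sum
is `s^{(k)} / β^{(k+1)}` with falling factorials `y^{(k)} = y (y - 1) ⋯ (y - k + 1)`. These terms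
telescope, for any `x` in place of `s`:
`∑_{k<m} x^{(k)} / β^{(k+1)} = (1 - x^{(m)} / β^{(m)}) / (β - x)`,
and for `m = n + 1 > s` the falling factorial `s^{(m)}` vanishes, leaving `1 / (β - s)`.
-/

open Finset Polynomial

theorem sum_descPochhammer_div_descPochhammer_succ {F : Type*} [Field F] {x β : F}
    (hx : β - x ≠ 0) (m : ℕ) (hβ : (descPochhammer F m).eval β ≠ 0) :
    ∑ k ∈ range m, (descPochhammer F k).eval x / (descPochhammer F (k + 1)).eval β =
      (1 - (descPochhammer F m).eval x / (descPochhammer F m).eval β) / (β - x) := by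
  induction m with
  | zero => simp
  | succ m ih =>
    rw [descPochhammer_succ_eval, mul_ne_zero_iff] at hβ
    rw [sum_range_succ, ih hβ.1]
    simp only [descPochhammer_succ_eval]
    field_simp [hβ.1, hβ.2]
    ring

section Boolean

variable {ι R : Type*} [CommSemiring R] [DecidableEq R] {a : ι → R}

theorem eq_ite_of_boolean (ha : ∀ i, a i = 0 ∨ a i = 1) :
    a = fun i => if a i = 1 then 1 else 0 := by
  funext i; rcases ha i with h | h <;> simp [h]

theorem sum_of_boolean (ha : ∀ i, a i = 0 ∨ a i = 1) (s : Finset ι) :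
    ∑ i ∈ s, a i = #{i ∈ s | a i = 1} := by
  conv_lhs => rw [eq_ite_of_boolean ha]
  rw [sum_boole]

theorem sum_powersetCard_prod_of_boolean (ha : ∀ i, a i = 0 ∨ a i = 1) (s : Finset ι)
    (k : ℕ) :
    ∑ S ∈ s.powersetCard k, ∏ i ∈ S, a i = (#{i ∈ s | a i = 1}).choose k := by
  conv_lhs => rw [eq_ite_of_boolean ha]
  rw [← card_powersetCard]
  simp only [prod_boole, sum_boole]
  congr 2
  ext S
  simp only [mem_filter, mem_powersetCard, subset_iff]
  grind

end Boolean

theorem stmt6_general (n : ℕ) (F : Type*) [Field F]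
    (β : F) (hβ : ∀ j : ℕ, j ≤ n → β ≠ (j : F))
    (a : Fin n → F) (ha : ∀ i, a i = 0 ∨ a i = 1) :
    (-(∑ k ∈ Finset.range (n + 1),
        ((k.factorial : F) / ∏ j ∈ Finset.range (k + 1), (β - (j : F))) *
          (∑ S ∈ Finset.univ.powersetCard k, ∏ i ∈ S, a i))) *
      ((∑ i, a i) - β) = 1 := by
  classical
  set s := #{i | a i = 1}
  have hsn : s ≤ n := (card_filter_le _ _).trans_eq (card_fin n)
  have hβs : β - s ≠ 0 := sub_ne_zero.mpr (hβ s hsn)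
  have hβn : (descPochhammer F (n + 1)).eval β ≠ 0 := by
    rw [descPochhammer_eval_eq_prod_range]
    exact prod_ne_zero_iff.mpr fun j hj => sub_ne_zero.mpr (hβ j (mem_range_succ_iff.mp hj))
  have hterm : ∀ k ∈ range (n + 1),
      (k.factorial / ∏ j ∈ range (k + 1), (β - j)) *
          ∑ S ∈ univ.powersetCard k, ∏ i ∈ S, a i =
        (descPochhammer F k).eval (s : F) / (descPochhammer F (k + 1)).eval β := by
    intro k _
    rw [sum_powersetCard_prod_of_boolean ha, descPochhammer_eval_eq_descFactorial,
      Nat.descFactorial_eq_factorial_mul_choose, descPochhammer_eval_eq_prod_range]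
    push_cast
    ring
  rw [sum_congr rfl hterm, sum_descPochhammer_div_descPochhammer_succ hβs _ hβn,
    descPochhammer_eval_eq_descFactorial, Nat.descFactorial_eq_zero_iff_lt.mpr (by omega),
    sum_of_boolean ha]
  field_simp
  ring

/-- For a field with `char F = 0` or `char F > n` and
`β ∉ {0,…,n}`, the polynomial
`f(x) = −Σ_{k≤n} (k!/∏_{j≤k}(β−j))·S_{n,k}(x)` satisfies
`f(a)·(Σᵢ aᵢ − β) = 1` on every Boolean point `a ∈ {0,1}ⁿ`. -/
theorem stmt6 (n : ℕ) (F : Type*) [Field F]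
    (hchar : ringChar F = 0 ∨ n < ringChar F)
    (β : F) (hβ : ∀ j : ℕ, j ≤ n → β ≠ (j : F))
    (a : Fin n → F) (ha : ∀ i, a i = 0 ∨ a i = 1) :
    (-(∑ k ∈ Finset.range (n + 1),
        ((k.factorial : F) / ∏ j ∈ Finset.range (k + 1), (β - (j : F))) *
          (∑ S ∈ Finset.univ.powersetCard k, ∏ i ∈ S, a i))) *
      ((∑ i, a i) - β) = 1 :=
  stmt6_general n F β hβ a ha
end

section
/- Recursive identity for injection-sum polynomials: for D ⊆ [n+1] with |D| ≥ 1, define B_D(x⃗) := Σ_{γ: D → [n] injective} ∏_{i∈D} x_{i,γ(i)} and X_{D→j} := ∏_{i∈D} x_{ij}, with B_∅ = 1. Then over ℚ, B_D = Σ_{k=1}^{|D|} (−1)^{k−1} · (k!/|D|) · Σ_{D_k ⊆ D, |D_k|=k} (Σ_{j∈[n]} X_{D_k→j}) · B_{D∖D_k}. -/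
/-!
Expanding all products, both sides become sums of monomials `∏_{i ∈ D} x_{i, g i}` over maps
`g : D → κ`, and the term of a block `F` produces exactly the maps that are constant on `F` and
injective on `D \ F`. If `g` is injective, only the `#D` singletons qualify, so the coefficient of
its monomial is `1!/#D · #D = 1`. Otherwise a block `F` qualifies only if `g` has a single fiber
`G` with `m = #G ≥ 2` points, `g` is injective off `G`, and `F` is `G` or one of its `m` subsets of
size `m - 1`; these contribute `(-1)^m (m-1)! m + (-1)^(m-1) m! = 0`.
-/

open MvPolynomial

/-- The injection-sum polynomial `B_D = Σ_{γ : D ↪ [n]} ∏_{i ∈ D} x_{i,γ(i)}`. -/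
noncomputable def injSum (n : ℕ) (D : Finset (Fin (n + 1))) :
    MvPolynomial (Fin (n + 1) × Fin n) ℚ :=
  ∑ γ : (↥D ↪ Fin n), ∏ i : ↥D, X ((i : Fin (n + 1)), γ i)

open Finset Nat

lemma sum_Icc_neg_one_pow_mul_factorial_mul_choose_eq_zero {R : Type*} [CommRing R] {m N : ℕ}
    (hm : 2 ≤ m) (hmN : m ≤ N) :
    ∑ k ∈ Icc 1 N, (-1 : R) ^ (k - 1) * k ! * (if m ≤ k + 1 then (m.choose k : R) else 0) = 0 := by
  obtain ⟨l, rfl⟩ : ∃ l, m = l + 2 := ⟨m - 2, by omega⟩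
  rw [sum_eq_add_of_mem (l + 1) (l + 2) (by simp; omega) (by simp; omega) (by omega)]
  · rw [if_pos (by omega), if_pos (by omega), choose_succ_self_right, choose_self,
      add_tsub_cancel_right, show l + 2 - 1 = l + 1 by omega, factorial_succ (l + 1)]
    push_cast
    ring
  · intro k _ ⟨hk₁, hk₂⟩
    rcases lt_or_gt_of_ne hk₂ with hlt | hgt
    · rw [if_neg (by omega), mul_zero]
    · rw [choose_eq_zero_of_lt hgt]
      simp

section Combinatorics

open scoped Classical

variable {ι κ : Type*}

lemma card_le_one_of_injOn_of_forall_eq {g : ι → κ} {s : Finset ι} {j : κ}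
    (hg : Set.InjOn g s) (hj : ∀ i ∈ s, g i = j) : #s ≤ 1 :=
  card_le_one.2 fun a ha b hb => hg ha hb ((hj a ha).trans (hj b hb).symm)

variable [DecidableEq ι]

def ConstOnInjOnSdiff (g : ι → κ) (D F : Finset ι) : Prop :=
  (∃ j, ∀ i ∈ F, g i = j) ∧ Set.InjOn g ↑(D \ F)

variable {g : ι → κ} {D F : Finset ι}

lemma constOnInjOnSdiff_iff_of_injOn (hg : Set.InjOn g D) (hFD : F ⊆ D) (hF : F.Nonempty) :
    ConstOnInjOnSdiff g D F ↔ #F = 1 := by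
  constructor
  · rintro ⟨⟨j, hj⟩, -⟩
    exact le_antisymm (card_le_one_of_injOn_of_forall_eq (hg.mono (by simpa)) hj) hF.card_pos
  · intro h
    obtain ⟨a, rfl⟩ := card_eq_one.1 h
    exact ⟨⟨g a, by simp⟩, hg.mono (by simp)⟩

lemma constOnInjOnSdiff_iff_of_one_lt_card_fiber {c : κ} (hc : 1 < #{i ∈ D | g i = c})
    (hFD : F ⊆ D) :
    ConstOnInjOnSdiff g D F ↔ F ⊆ {i ∈ D | g i = c} ∧ #{i ∈ D | g i = c} ≤ #F + 1 ∧
      Set.InjOn g ↑(D \ {i ∈ D | g i = c}) := by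
  set G := {i ∈ D | g i = c}
  have hGc : ∀ i ∈ G, g i = c := fun i hi => (mem_filter.1 hi).2
  constructor
  · rintro ⟨⟨j, hj⟩, hinj⟩
    have hGF : #(G \ F) ≤ 1 := by
      have hsub : G \ F ⊆ D \ F := sdiff_subset_sdiff (filter_subset _ D) le_rfl
      exact card_le_one_of_injOn_of_forall_eq (hinj.mono (coe_subset.2 hsub))
        fun i hi => hGc i (mem_sdiff.1 hi).1
    have hjc : j = c := by
      obtain ⟨a, ha, b, hb, hab⟩ := one_lt_card.1 hc
      by_contra hjc
      have hGDF : ∀ i ∈ G, i ∈ (↑(D \ F) : Set ι) := fun i hi => mem_sdiff.2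
        ⟨(mem_filter.1 hi).1, fun hiF => hjc ((hj i hiF).symm.trans (hGc i hi))⟩
      exact hab (hinj (hGDF a ha) (hGDF b hb) ((hGc a ha).trans (hGc b hb).symm))
    have hFG : F ⊆ G := fun i hi => mem_filter.2 ⟨hFD hi, hjc ▸ hj i hi⟩
    refine ⟨hFG, ?_, hinj.mono (coe_subset.2 (sdiff_subset_sdiff le_rfl hFG))⟩
    rw [card_sdiff_of_subset hFG] at hGF
    omega
  · rintro ⟨hFG, hcard, hinj⟩
    refine ⟨⟨c, fun i hi => hGc i (hFG hi)⟩, fun x hx y hy hxy => ?_⟩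
    simp only [coe_sdiff, Set.mem_sdiff, mem_coe] at hx hy
    by_cases hxc : g x = c
    · have hGF : #(G \ F) ≤ 1 := by rw [card_sdiff_of_subset hFG]; omega
      exact card_le_one.1 hGF x (by simp [G, hx.1, hx.2, hxc]) y
        (by simp [G, hy.1, hy.2, ← hxy, hxc])
    · exact hinj (by simp [G, hx.1, hxc]) (by simp [G, hy.1, ← hxy, hxc]) hxy

lemma card_filter_constOnInjOnSdiff_of_injOn (hg : Set.InjOn g D) {k : ℕ} (hk : 1 ≤ k) :
    #{F ∈ D.powersetCard k | ConstOnInjOnSdiff g D F} = if k = 1 then #D else 0 := by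
  have hiff : ∀ F ∈ D.powersetCard k, ConstOnInjOnSdiff g D F ↔ k = 1 := by
    intro F hF
    obtain ⟨hFD, rfl⟩ := mem_powersetCard.1 hF
    exact constOnInjOnSdiff_iff_of_injOn hg hFD (card_pos.1 hk)
  rw [filter_congr hiff, filter_const]
  split_ifs with h
  · rw [h, card_powersetCard, choose_one_right]
  · rfl

lemma card_filter_constOnInjOnSdiff_of_one_lt_card_fiber {c : κ}
    (hc : 1 < #{i ∈ D | g i = c}) {k : ℕ} (hk : 1 ≤ k) :
    #{F ∈ D.powersetCard k | ConstOnInjOnSdiff g D F} =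
      if Set.InjOn g ↑(D \ {i ∈ D | g i = c}) ∧ #{i ∈ D | g i = c} ≤ k + 1 then
        (#{i ∈ D | g i = c}).choose k else 0 := by
  set G := {i ∈ D | g i = c}
  have hfilter : {F ∈ D.powersetCard k | ConstOnInjOnSdiff g D F} =
      {F ∈ G.powersetCard k | Set.InjOn g ↑(D \ G) ∧ #G ≤ k + 1} := by
    ext F
    simp only [mem_filter, mem_powersetCard]
    constructor
    · rintro ⟨⟨hFD, rfl⟩, hF⟩
      obtain ⟨hFG, hcard, hinj⟩ := (constOnInjOnSdiff_iff_of_one_lt_card_fiber hc hFD).1 hF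
      exact ⟨⟨hFG, rfl⟩, hinj, hcard⟩
    · rintro ⟨⟨hFG, rfl⟩, hinj, hcard⟩
      have hFD : F ⊆ D := hFG.trans (filter_subset _ D)
      exact ⟨⟨hFD, rfl⟩, (constOnInjOnSdiff_iff_of_one_lt_card_fiber hc hFD).2 ⟨hFG, hcard, hinj⟩⟩
  rw [hfilter, filter_const]
  split_ifs <;> simp

theorem sum_Icc_mul_card_filter_constOnInjOnSdiff {R : Type*} [Field R] [CharZero R]
    (hD : D.Nonempty) :
    ∑ k ∈ Icc 1 #D, (-1 : R) ^ (k - 1) * k ! / #D *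
        #{F ∈ D.powersetCard k | ConstOnInjOnSdiff g D F} =
      if Set.InjOn g D then 1 else 0 := by
  have hD0 : (#D : R) ≠ 0 := by simpa using hD.card_pos.ne'
  split_ifs with hg
  · rw [sum_congr rfl fun k hk => by
      rw [card_filter_constOnInjOnSdiff_of_injOn hg (mem_Icc.1 hk).1]]
    simp [hD0, hD.ne_empty]
  · obtain ⟨a, ha, b, hb, hab, hne⟩ : ∃ a ∈ D, ∃ b ∈ D, g a = g b ∧ a ≠ b := by
      simpa [Set.InjOn] using hg
    have hc : 1 < #{i ∈ D | g i = g a} :=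
      one_lt_card.2 ⟨a, by simp [ha], b, by simp [hb, hab], hne⟩
    rw [sum_congr rfl fun k hk => by
      rw [card_filter_constOnInjOnSdiff_of_one_lt_card_fiber hc (mem_Icc.1 hk).1]]
    by_cases hinj : Set.InjOn g ↑(D \ {i ∈ D | g i = g a})
    · simp_rw [hinj, true_and, div_mul_eq_mul_div, ← sum_div, Nat.cast_ite, Nat.cast_zero]
      rw [sum_Icc_neg_one_pow_mul_factorial_mul_choose_eq_zero hc (card_le_card (filter_subset _ D)),
        zero_div]
    · simp only [hinj, false_and, if_false, Nat.cast_zero, mul_zero, sum_const_zero]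

end Combinatorics

section Polynomial

variable {ι κ R : Type*} [DecidableEq ι] [Fintype κ] [DecidableEq κ]

noncomputable def embeddingSum [CommSemiring R] (D : Finset ι) : MvPolynomial (ι × κ) R :=
  ∑ γ : D ↪ κ, ∏ i : D, X (↑i, γ i)

variable [Fintype ι]

/-- Maps `D → κ` are encoded as maps `ι → κ` equal to a fixed `z` off `D`, so that the maps on
the various `D \ F` live in one type and can be glued. -/
def funsEqOff (D : Finset ι) (z : κ) : Finset (ι → κ) := {g | ∀ i ∉ D, g i = z}

@[simp]
lemma mem_funsEqOff {D : Finset ι} {z : κ} {g : ι → κ} : g ∈ funsEqOff D z ↔ ∀ i ∉ D, g i = z := by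
  simp [funsEqOff]

open scoped Classical

variable [CommSemiring R]

lemma embeddingSum_eq_sum_filter (D : Finset ι) (z : κ) :
    (embeddingSum D : MvPolynomial (ι × κ) R) =
      ∑ f ∈ funsEqOff D z with Set.InjOn f D, ∏ i ∈ D, X (i, f i) := by
  refine sum_bij' (fun γ _ i => if h : i ∈ D then γ ⟨i, h⟩ else z)
    (fun f hf => ⟨fun i => f i, fun x y hxy => Subtype.ext ((mem_filter.1 hf).2 x.2 y.2 hxy)⟩)
    ?_ (fun _ _ => mem_univ _) ?_ ?_ ?_
  · intro γ _
    refine mem_filter.2 ⟨mem_funsEqOff.2 fun i hi => dif_neg hi, fun x hx y hy hxy => ?_⟩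
    simpa [dif_pos (mem_coe.1 hx), dif_pos (mem_coe.1 hy)] using hxy
  · intro γ _
    ext
    simp
  · intro f hf
    funext i
    by_cases hi : i ∈ D
    · simp only [hi, dif_pos]
      rfl
    · simp [hi, mem_funsEqOff.1 (mem_filter.1 hf).1 i hi]
  · intro γ _
    rw [← prod_coe_sort D]
    simp

lemma sum_prod_X_mul_embeddingSum_sdiff {D F : Finset ι} (hFD : F ⊆ D) (hF : F.Nonempty) (z : κ) :
    (∑ j, ∏ i ∈ F, X (i, j)) * (embeddingSum (D \ F) : MvPolynomial (ι × κ) R) =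
      ∑ g ∈ funsEqOff D z with ConstOnInjOnSdiff g D F, ∏ i ∈ D, X (i, g i) := by
  rw [embeddingSum_eq_sum_filter (D \ F) z, sum_mul_sum, ← sum_product']
  refine sum_bij' (fun p _ => F.piecewise (fun _ => p.1) p.2)
    (fun g _ => (g hF.choose, F.piecewise (fun _ => z) g)) ?_ ?_ ?_ ?_ ?_
  · rintro ⟨j, f⟩ hp
    simp only [mem_product, mem_univ, true_and, mem_filter, mem_funsEqOff] at hp
    refine mem_filter.2 ⟨mem_funsEqOff.2 fun i hi => ?_,
      ⟨j, fun i hi => piecewise_eq_of_mem _ _ _ hi⟩, ?_⟩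
    · rw [piecewise_eq_of_notMem _ _ _ fun h => hi (hFD h)]
      exact hp.1 i fun h => hi (mem_sdiff.1 h).1
    · exact hp.2.congr fun i hi => (piecewise_eq_of_notMem _ _ _ (mem_sdiff.1 hi).2).symm
  · rintro g hg
    simp only [mem_filter, mem_funsEqOff] at hg
    obtain ⟨hgz, -, hginj⟩ := hg
    simp only [mem_product, mem_univ, true_and, mem_filter, mem_funsEqOff]
    refine ⟨fun i hi => ?_, hginj.congr fun i hi => ?_⟩
    · by_cases hiF : i ∈ F
      · exact piecewise_eq_of_mem _ _ _ hiF
      · rw [piecewise_eq_of_notMem _ _ _ hiF]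
        exact hgz i fun hiD => hi (mem_sdiff.2 ⟨hiD, hiF⟩)
    · exact (piecewise_eq_of_notMem _ _ _ (mem_sdiff.1 hi).2).symm
  · rintro ⟨j, f⟩ hp
    simp only [mem_product, mem_univ, true_and, mem_filter, mem_funsEqOff] at hp
    refine Prod.ext (piecewise_eq_of_mem F (fun _ => j) f hF.choose_spec) (funext fun i => ?_)
    change F.piecewise (fun _ => z) (F.piecewise (fun _ => j) f) i = f i
    by_cases hiF : i ∈ F
    · rw [piecewise_eq_of_mem _ _ _ hiF]
      exact (hp.1 i fun hi => (mem_sdiff.1 hi).2 hiF).symm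
    · simp only [piecewise_eq_of_notMem _ _ _ hiF]
  · rintro g hg
    obtain ⟨j, hj⟩ := (mem_filter.1 hg).2.1
    funext i
    by_cases hiF : i ∈ F
    · rw [piecewise_eq_of_mem _ _ _ hiF, hj _ hF.choose_spec, hj i hiF]
    · simp only [piecewise_eq_of_notMem _ _ _ hiF]
  · rintro ⟨j, f⟩ -
    rw [← prod_inter_mul_prod_sdiff D F, inter_eq_right.2 hFD]
    congr 1
    · exact prod_congr rfl fun i hi => by rw [piecewise_eq_of_mem _ _ _ hi]
    · exact prod_congr rfl fun i hi => by rw [piecewise_eq_of_notMem _ _ _ (mem_sdiff.1 hi).2]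

end Polynomial

theorem embeddingSum_eq_sum_Icc {ι κ R : Type*} [Fintype ι] [DecidableEq ι] [Fintype κ]
    [DecidableEq κ] [Field R] [CharZero R] {D : Finset ι} (hD : D.Nonempty) :
    (embeddingSum D : MvPolynomial (ι × κ) R) =
      ∑ k ∈ Icc 1 #D, C ((-1 : R) ^ (k - 1) * k ! / #D) *
        ∑ Dk ∈ D.powersetCard k, (∑ j, ∏ i ∈ Dk, X (i, j)) * embeddingSum (D \ Dk) := by
  classical
  obtain hκ | ⟨⟨z⟩⟩ := isEmpty_or_nonempty κ
  · have : IsEmpty (D ↪ κ) := ⟨fun γ => isEmptyElim (γ ⟨_, hD.choose_spec⟩)⟩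
    simp [embeddingSum]
  set S := funsEqOff D z
  symm
  calc _ = ∑ k ∈ Icc 1 #D, ∑ F ∈ D.powersetCard k, ∑ g ∈ S,
        C ((-1 : R) ^ (k - 1) * k ! / #D) *
          if ConstOnInjOnSdiff g D F then ∏ i ∈ D, X (i, g i) else 0 := by
        refine sum_congr rfl fun k hk => ?_
        rw [mul_sum]
        refine sum_congr rfl fun F hF => ?_
        obtain ⟨hFD, rfl⟩ := mem_powersetCard.1 hF
        rw [sum_prod_X_mul_embeddingSum_sdiff hFD (card_pos.1 (mem_Icc.1 hk).1) z, sum_filter,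
          mul_sum]
    _ = ∑ g ∈ S, ∑ k ∈ Icc 1 #D, ∑ F ∈ D.powersetCard k,
        C ((-1 : R) ^ (k - 1) * k ! / #D) *
          if ConstOnInjOnSdiff g D F then ∏ i ∈ D, X (i, g i) else 0 := by
        rw [sum_comm]
        exact sum_congr rfl fun k _ => sum_comm
    _ = ∑ g ∈ S, C (∑ k ∈ Icc 1 #D, (-1 : R) ^ (k - 1) * k ! / #D *
          #{F ∈ D.powersetCard k | ConstOnInjOnSdiff g D F}) * ∏ i ∈ D, X (i, g i) := by
        refine sum_congr rfl fun g _ => ?_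
        rw [map_sum, sum_mul]
        refine sum_congr rfl fun k _ => ?_
        rw [← mul_sum, ← sum_filter, sum_const, nsmul_eq_mul, map_mul, map_natCast, mul_assoc]
    _ = ∑ g ∈ S, if Set.InjOn g D then ∏ i ∈ D, X (i, g i) else 0 := by
        refine sum_congr rfl fun g _ => ?_
        rw [sum_Icc_mul_card_filter_constOnInjOnSdiff hD]
        split_ifs <;> simp
    _ = embeddingSum D := by rw [embeddingSum_eq_sum_filter D z, sum_filter]

/-- Recursive inclusion–exclusion identity for the injection-sum
polynomials: for nonempty `D ⊆ [n+1]`,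
`B_D = Σ_{k=1}^{|D|} (−1)^{k−1}·(k!/|D|)·Σ_{D_k ⊆ D, |D_k| = k}
       (Σ_j X_{D_k→j})·B_{D∖D_k}`. -/
theorem stmt10 (n : ℕ) (D : Finset (Fin (n + 1))) (hD : D.Nonempty) :
    injSum n D =
      ∑ k ∈ Finset.Icc 1 D.card,
        C ((-1 : ℚ) ^ (k - 1) * (k.factorial : ℚ) / (D.card : ℚ)) *
          (∑ Dk ∈ D.powersetCard k,
            (∑ j : Fin n, ∏ i ∈ Dk, X (i, j)) * injSum n (D \ Dk)) :=
  embeddingSum_eq_sum_Icc hD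
end

section
/- CFI equation system satisfiability criterion: let G = (V,E) be 3-regular connected, u ∈ V, a ∈ F₂. The system over F₂ with variables x_i^e (e ∈ E, i ∈ F₂), consisting of the equations x_i^e + x_j^f + x_k^g = i+j+k + a·[v=u] (for every v with E(v)={e,f,g} and all i,j,k ∈ F₂), x_0^e + x_1^e = 1 for every e ∈ E, and x² = x for every variable, is satisfiable if and only if a = 0. -/
/-!
Summing the vertex equations with `i = j = k = 0` over all vertices gives `a` on the right,
since only `u` carries the twist. On the left every edge is counted once from each of its two
endpoints, so over `F₂` the sum vanishes and `a = 0`. Conversely, for `a = 0` the assignment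
`x_i^e := i` solves every equation.
-/

open Finset

theorem Finset.sum_eq_of_card_eq_three {ι M : Type*} [AddCommMonoid M] {s : Finset ι}
    (hs : #s = 3) {f : ι → M} {c : M}
    (h : ∀ a ∈ s, ∀ b ∈ s, ∀ d ∈ s, a ≠ b → a ≠ d → b ≠ d → f a + f b + f d = c) :
    ∑ i ∈ s, f i = c := by
  classical
  obtain ⟨a, b, d, hab, had, hbd, rfl⟩ := card_eq_three.mp hs
  rw [sum_insert (by simp [hab, had]), sum_insert (by simp [hbd]), sum_singleton, ← add_assoc]
  exact h a (by simp) b (by simp) d (by simp) hab had hbd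

namespace SimpleGraph

variable {V : Type*} [Fintype V] [DecidableEq V] (G : SimpleGraph V) [DecidableRel G.Adj]

theorem sum_sum_incidenceFinset {M : Type*} [AddCommMonoid M] (f : Sym2 V → M) :
    ∑ v, ∑ e ∈ G.incidenceFinset v, f e = 2 • ∑ e ∈ G.edgeFinset, f e := by
  rw [sum_comm' (t' := G.edgeFinset) (s' := fun e ↦ e.toFinset) (fun v e ↦ by
    simp [incidenceSet, Sym2.mem_toFinset, and_comm]), smul_sum]
  refine sum_congr rfl fun e he ↦ ?_
  rw [sum_const, Sym2.card_toFinset_of_not_isDiag e (G.not_isDiag_of_mem_edgeSet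
    (mem_edgeFinset.mp he))]

end SimpleGraph

theorem stmt16_general {V : Type*} [Fintype V] [DecidableEq V]
    (G : SimpleGraph V) [DecidableRel G.Adj]
    (hreg : G.IsRegularOfDegree 3) (u : V) (a : ZMod 2) :
    (∃ x : Sym2 V → ZMod 2 → ZMod 2,
      (∀ v : V, ∀ e f g : Sym2 V,
        e ∈ G.incidenceFinset v → f ∈ G.incidenceFinset v →
        g ∈ G.incidenceFinset v → e ≠ f → e ≠ g → f ≠ g →
        ∀ i j k : ZMod 2,
          x e i + x f j + x g k = i + j + k + a * (if v = u then 1 else 0)) ∧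
      (∀ e ∈ G.edgeFinset, x e 0 + x e 1 = 1) ∧
      (∀ (e : Sym2 V) (i : ZMod 2), (x e i) ^ 2 = x e i)) ↔
    a = 0 := by
  constructor
  · rintro ⟨x, hvertex, -, -⟩
    have hsum_at (v : V) :
        ∑ e ∈ G.incidenceFinset v, x e 0 = a * if v = u then 1 else 0 :=
      sum_eq_of_card_eq_three ((G.card_incidenceFinset_eq_degree v).trans (hreg v))
        fun e he f hf g hg hef heg hfg ↦ by
          simpa using hvertex v e f g he hf hg hef heg hfg 0 0 0
    calc a = ∑ v, a * if v = u then 1 else 0 := by simp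
      _ = ∑ v, ∑ e ∈ G.incidenceFinset v, x e 0 := sum_congr rfl fun v _ ↦ (hsum_at v).symm
      _ = 0 := by rw [G.sum_sum_incidenceFinset, two_nsmul, CharTwo.add_self_eq_zero]
  · rintro rfl
    refine ⟨fun _ i ↦ i, fun _ _ _ _ _ _ _ _ _ _ _ _ _ ↦ by ring, fun _ _ ↦ by ring,
      fun _ i ↦ ?_⟩
    fin_cases i <;> rfl

/-- CFI satisfiability criterion: for a 3-regular connected graph
`G`, distinguished vertex `u` and twist `a ∈ F₂`, the CFI system (vertex
equations `x_i^e + x_j^f + x_k^g = i + j + k + a·[v = u]` for the three distinct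
incident edges of each vertex, edge equations `x_0^e + x_1^e = 1` and Boolean
axioms) is satisfiable if and only if `a = 0`. -/
theorem stmt16 {V : Type*} [Fintype V] [DecidableEq V]
    (G : SimpleGraph V) [DecidableRel G.Adj]
    (hreg : G.IsRegularOfDegree 3) (hconn : G.Connected) (u : V) (a : ZMod 2) :
    (∃ x : Sym2 V → ZMod 2 → ZMod 2,
      (∀ v : V, ∀ e f g : Sym2 V,
        e ∈ G.incidenceFinset v → f ∈ G.incidenceFinset v →
        g ∈ G.incidenceFinset v → e ≠ f → e ≠ g → f ≠ g →
        ∀ i j k : ZMod 2,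
          x e i + x f j + x g k = i + j + k + a * (if v = u then 1 else 0)) ∧
      (∀ e ∈ G.edgeFinset, x e 0 + x e 1 = 1) ∧
      (∀ (e : Sym2 V) (i : ZMod 2), (x e i) ^ 2 = x e i)) ↔
    a = 0 :=
  stmt16_general G hreg u a
end
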